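/- arXiv:1108.1324 — 2 statements merged into one kernel-verified Lean document; each statement's English description precedes it below -/
import Mathlib

section
/- Let (X,d,μ) be a metric measure space with μ Borel regular and doubling with constant C_μ, admitting a p-Poincaré inequality with constant L ≥ 1 for some p ≥ 1. Let X̄ be the metric completion of X and let μ̄ be the Borel measure on X̄ defined by μ̄(Y) = μ(Y ∩ X). Then μ̄ is doubling and (X̄, d, μ̄) admits a p-Poincaré inequality, with constants depending only on C_μ, L and p. -/
open Metric MeasureTheory Filter Set
open scoped NNReal ENNReal

/-- The variation of `f` on the ball `B(x,r)`: `sup { |f y - f x| / r : y ∈ B(x,r) }`. -/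
noncomputable def varBall {X : Type*} [MetricSpace X] (f : X → ℝ) (x : X) (r : ℝ) : ℝ :=
  sSup ((fun y => |f y - f x| / r) '' Metric.ball x r)

/-- Lower pointwise Lipschitz constant `lip_x f`. -/
noncomputable def lipLow {X : Type*} [MetricSpace X] (f : X → ℝ) (x : X) : ℝ :=
  Filter.liminf (fun r => varBall f x r) (nhdsWithin 0 (Set.Ioi (0:ℝ)))

/-- Upper pointwise Lipschitz constant `Lip_x f`. -/
noncomputable def lipUp {X : Type*} [MetricSpace X] (f : X → ℝ) (x : X) : ℝ :=
  Filter.limsup (fun r => varBall f x r) (nhdsWithin 0 (Set.Ioi (0:ℝ)))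

/-- `f` is a real-valued Lipschitz function. -/
def IsLip {X : Type*} [MetricSpace X] (f : X → ℝ) : Prop := ∃ K : ℝ≥0, LipschitzWith K f

/-- `μ` is doubling with constant `C`. -/
def DoublingWith {X : Type*} [MetricSpace X] [MeasurableSpace X] (μ : Measure X) (C : ℝ≥0) :
    Prop :=
  ∀ (x : X) (r : ℝ), 0 < r → μ (Metric.ball x (2 * r)) ≤ (C : ℝ≥0∞) * μ (Metric.ball x r)

/-- `(X, μ)` admits a `p`-Poincaré inequality with constant `L`. -/
def PoincareIneq {X : Type*} [MetricSpace X] [MeasurableSpace X] (μ : Measure X) (p L : ℝ) :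
    Prop :=
  (∀ (x : X) (r : ℝ), 0 < r → 0 < μ (Metric.ball x r) ∧ μ (Metric.ball x r) < ⊤) ∧
  ∀ f : X → ℝ, IsLip f → ∀ (x : X) (r : ℝ), 0 < r →
    ⨍ y in Metric.ball x r, |f y - ⨍ z in Metric.ball x r, f z ∂μ| ∂μ ≤
      L * r * (⨍ z in Metric.ball x (L * r), (lipLow f z) ^ p ∂μ) ^ (1 / p)

/-- An `N`-tuple of functions is dependent to first order at `x`. -/
def DependentAt {X : Type*} [MetricSpace X] {N : ℕ} (f : Fin N → X → ℝ) (x : X) : Prop :=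
  ∃ l : Fin N → ℝ, l ≠ 0 ∧ lipUp (fun y => ∑ i, l i * f i y) x = 0

/-- A measurable differentiable structure of dimension at most `N₀`. -/
def HasMDS {X : Type*} [MetricSpace X] [MeasurableSpace X] (μ : Measure X) (N₀ : ℕ) : Prop :=
  ∃ (ι : Type) (_ : Countable ι) (U : ι → Set X) (N : ι → ℕ)
      (φ : (i : ι) → Fin (N i) → X → ℝ),
    (∀ i, MeasurableSet (U i) ∧ 0 < μ (U i)) ∧
    μ (Set.univ \ ⋃ i, U i) = 0 ∧
    (∀ i, N i ≤ N₀) ∧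
    (∀ i k, IsLip (φ i k)) ∧
    (∀ f : X → ℝ, IsLip f → ∀ i, ∃ df : X → (Fin (N i) → ℝ),
      Measurable df ∧
      (∀ᵐ x ∂(μ.restrict (U i)),
        lipUp (fun y => f y - ∑ k, df x k * φ i k y) x = 0) ∧
      ∀ dg : X → (Fin (N i) → ℝ), Measurable dg →
        (∀ᵐ x ∂(μ.restrict (U i)),
          lipUp (fun y => f y - ∑ k, dg x k * φ i k y) x = 0) →
        (∀ᵐ x ∂(μ.restrict (U i)), df x = dg x))



/-!
Balls of `X̄` centred at points of `X` have the `μ`-measure of the corresponding balls of `X`, and a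
Lipschitz function on `X̄` has, at points of `X`, the same lower pointwise Lipschitz constant as its
restriction to `X` (the supremum of a continuous function over an open set equals its supremum over
any dense part of it). Hence doubling and the Poincaré inequality hold, with the same constants, on
balls centred in the dense subset `X`. A general ball `B(y,r)` is exhausted from inside by balls
`B(x, r - δ)` with `x ∈ X` close to `y`; since measures of balls are left-continuous in the radius,
both inequalities survive the limit `δ → 0`.
-/

open Topology

section Variation

variable {X : Type*} [MetricSpace X] {f : X → ℝ} {K : ℝ≥0} {x y : X} {q r : ℝ}

lemma abs_sub_div_le_of_mem_ball (hf : LipschitzWith K f) (hy : y ∈ ball x r) :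
    |f y - f x| / r ≤ K := by
  rw [div_le_iff₀ (pos_of_mem_ball hy), ← Real.dist_eq]
  exact (hf.dist_le_mul y x).trans (by gcongr; exact (mem_ball.1 hy).le)

lemma bddAbove_image_ball (hf : LipschitzWith K f) (x : X) (r : ℝ) :
    BddAbove ((fun y => |f y - f x| / r) '' ball x r) :=
  ⟨K, by rintro _ ⟨y, hy, rfl⟩; exact abs_sub_div_le_of_mem_ball hf hy⟩

lemma le_varBall (hf : LipschitzWith K f) (hy : y ∈ ball x r) :
    |f y - f x| / r ≤ varBall f x r :=
  le_csSup (bddAbove_image_ball hf x r) ⟨y, hy, rfl⟩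

lemma varBall_nonneg (hf : LipschitzWith K f) (x : X) (r : ℝ) : 0 ≤ varBall f x r := by
  rcases le_or_gt r 0 with hr | hr
  · simp [varBall, ball_eq_empty.2 hr]
  · simpa using le_varBall hf (mem_ball_self hr)

lemma varBall_le (hf : LipschitzWith K f) (x : X) (hr : 0 < r) : varBall f x r ≤ K :=
  csSup_le ((nonempty_ball.2 hr).image _) (by
    rintro _ ⟨y, hy, rfl⟩; exact abs_sub_div_le_of_mem_ball hf hy)

lemma varBall_le_div_mul (hf : LipschitzWith K f) (x : X) (hq : 0 < q) (hqr : q ≤ r) :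
    varBall f x q ≤ r / q * varBall f x r := by
  refine csSup_le ((nonempty_ball.2 hq).image _) ?_
  rintro _ ⟨y, hy, rfl⟩
  calc |f y - f x| / q = r / q * (|f y - f x| / r) := by
        field_simp [(hq.trans_le hqr).ne']
    _ ≤ r / q * varBall f x r :=
        mul_le_mul_of_nonneg_left (le_varBall hf (ball_subset_ball hqr hy))
          (div_nonneg (hq.le.trans hqr) hq.le)

lemma lowerSemicontinuous_varBall (hf : LipschitzWith K f) (hr : 0 < r) :
    LowerSemicontinuous (varBall f · r) := by
  intro x a ha
  obtain ⟨_, ⟨y, hy, rfl⟩, hay⟩ := exists_lt_of_lt_csSup ((nonempty_ball.2 hr).image _) ha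
  have hy_mem : ∀ᶠ x' in 𝓝 x, y ∈ ball x' r := by
    simp_rw [mem_ball_comm (x := y)]
    exact isOpen_ball.mem_nhds (mem_ball_comm.1 hy)
  have hy_val : ∀ᶠ x' in 𝓝 x, a < |f y - f x'| / r :=
    continuousAt_const.eventually_lt
      ((continuous_const.sub hf.continuous).abs.div_const r).continuousAt hay
  filter_upwards [hy_mem, hy_val] with x' hx' hax'
  exact hax'.trans_le (le_varBall hf hx')

end Variation

section LowerLipschitzConstant

lemma liminf_nhdsGT_eq_liminf_rat {h : ℝ → ℝ} (h0 : ∀ r, 0 < r → 0 ≤ h r)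
    (hscale : ∀ q r, 0 < q → q ≤ r → h q ≤ r / q * h r) :
    liminf h (𝓝[>] 0) = liminf (fun q : ℚ => h q) (𝓝[>] 0) := by
  simp only [liminf_eq]
  congr 1
  ext a
  constructor
  · have hcast : Tendsto ((↑) : ℚ → ℝ) (𝓝[>] 0) (𝓝[>] 0) :=
      tendsto_nhdsWithin_of_tendsto_nhds_of_eventually_within _
        ((Rat.continuous_coe_real.tendsto' 0 0 Rat.cast_zero).mono_left nhdsWithin_le_nhds)
        (eventually_mem_nhdsWithin.mono fun _ hq => mem_Ioi.2 (Rat.cast_pos.2 hq))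
    exact fun ha => hcast.eventually ha
  · intro ha
    obtain ⟨ε, hε, hsub⟩ := (nhdsGT_basis (0 : ℚ)).eventually_iff.1 ha
    filter_upwards [Ioo_mem_nhdsGT (show (0 : ℝ) < ε by exact_mod_cast hε)] with r ⟨hr0, hrε⟩
    by_contra! hlt
    have ha0 : 0 < a := (h0 r hr0).trans_lt hlt
    -- a rational `q < r` so close to `r` that the scaling bound `h q ≤ (r / q) h r` stays below `a`
    obtain ⟨q, hq1, hq2⟩ := exists_rat_btwn
      (show r * h r / a < r by rw [div_lt_iff₀ ha0]; exact mul_lt_mul_of_pos_left hlt hr0)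
    have hq0 : (0 : ℝ) < q := (div_nonneg (mul_nonneg hr0.le (h0 r hr0)) ha0.le).trans_lt hq1
    have haq : a ≤ h q := hsub ⟨by exact_mod_cast hq0, by exact_mod_cast hq2.trans hrε⟩
    have hbound : r / q * h r < a := by
      rw [div_lt_iff₀ ha0] at hq1
      rw [div_mul_eq_mul_div, div_lt_iff₀ hq0]
      linarith
    linarith [hscale q r hq0 hq2.le]

variable {X : Type*} [MetricSpace X] {f : X → ℝ} {K : ℝ≥0}

lemma measurable_lipLow [MeasurableSpace X] [OpensMeasurableSpace X] (hf : LipschitzWith K f) :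
    Measurable (lipLow f) := by
  have hrat : lipLow f = fun x => liminf (fun q : ℚ => varBall f x q) (𝓝[>] 0) :=
    funext fun x => liminf_nhdsGT_eq_liminf_rat (fun r _ => varBall_nonneg hf x r)
      fun _ _ hq hqr => varBall_le_div_mul hf x hq hqr
  rw [hrat]
  refine Measurable.liminf' (fun q => ?_) ⟨nhdsGT_basis 0, Set.to_countable _⟩
    fun _ => Set.to_countable _
  rcases le_or_gt (q : ℝ) 0 with hq | hq
  · simp only [varBall, ball_eq_empty.2 hq, image_empty]
    exact measurable_const
  · exact (lowerSemicontinuous_varBall hf hq).measurable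

lemma eventually_varBall_le (hf : LipschitzWith K f) (x : X) :
    ∀ᶠ r in 𝓝[>] 0, varBall f x r ≤ K :=
  eventually_mem_nhdsWithin.mono fun _ hr => varBall_le hf x hr

lemma lipLow_nonneg (hf : LipschitzWith K f) (x : X) : 0 ≤ lipLow f x :=
  le_liminf_of_le (isCoboundedUnder_ge_of_eventually_le _ (eventually_varBall_le hf x))
    (Eventually.of_forall fun r => varBall_nonneg hf x r)

lemma lipLow_le (hf : LipschitzWith K f) (x : X) : lipLow f x ≤ K :=
  liminf_le_of_le
    (isBoundedUnder_of_eventually_ge (Eventually.of_forall fun r => varBall_nonneg hf x r))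
    fun _ hb => let ⟨_, hb, hK⟩ := (hb.and (eventually_varBall_le hf x)).exists; hb.trans hK

end LowerLipschitzConstant

lemma csSup_image_inter_dense {Y : Type*} [TopologicalSpace Y] {φ : Y → ℝ} (hφ : Continuous φ)
    {U S : Set Y} (hU : IsOpen U) (hS : Dense S) (hbdd : BddAbove (φ '' U)) :
    sSup (φ '' (U ∩ S)) = sSup (φ '' U) := by
  rcases U.eq_empty_or_nonempty with rfl | hne
  · simp
  have hbdd' : BddAbove (φ '' (U ∩ S)) := hbdd.mono (image_mono inter_subset_left)
  refine le_antisymm (csSup_le_csSup hbdd ((hS.inter_open_nonempty U hU hne).image φ)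
    (image_mono inter_subset_left)) (csSup_le (hne.image φ) ?_)
  rintro _ ⟨w, hw, rfl⟩
  have hcl : φ w ∈ closure (φ '' (U ∩ S)) :=
    mem_closure_image hφ.continuousAt (hS.open_subset_closure_inter hU hw)
  exact isClosed_Iic.closure_subset_iff.2 (fun _ hz => le_csSup hbdd' hz) hcl

section DenseIsometry

variable {X Y : Type*} [MetricSpace X] [MetricSpace Y] {ι : X → Y} {f : Y → ℝ} {K : ℝ≥0}

lemma varBall_comp_isometry (hι : Isometry ι) (hd : DenseRange ι) (hf : LipschitzWith K f)
    (x : X) (r : ℝ) : varBall (f ∘ ι) x r = varBall f (ι x) r := by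
  have himage : ι '' ball x r = ball (ι x) r ∩ range ι := by
    rw [← hι.preimage_ball, image_preimage_eq_inter_range]
  have hφ : Continuous fun w => |f w - f (ι x)| / r := by
    have := hf.continuous
    fun_prop
  rw [varBall, varBall,
    ← csSup_image_inter_dense hφ isOpen_ball hd (bddAbove_image_ball hf (ι x) r), ← himage,
    image_image]
  rfl

lemma lipLow_comp_isometry (hι : Isometry ι) (hd : DenseRange ι) (hf : LipschitzWith K f)
    (x : X) : lipLow (f ∘ ι) x = lipLow f (ι x) := by
  simp only [lipLow, varBall_comp_isometry hι hd hf]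

end DenseIsometry

section Averages

variable {α : Type*} [MeasurableSpace α] {ν : Measure α} {s t : Set α} {f g : α → ℝ}

lemma integrableOn_of_forall_abs_sub_le {c M : ℝ} (ht : MeasurableSet t) (htfin : ν t ≠ ∞)
    (hf : AEStronglyMeasurable f (ν.restrict t)) (hfc : ∀ z ∈ t, |f z - c| ≤ M) :
    IntegrableOn f t ν := by
  refine IntegrableOn.of_bound htfin.lt_top hf (|c| + M) ((ae_restrict_iff' ht).2 ?_)
  refine Eventually.of_forall fun z hz => ?_
  rw [Real.norm_eq_abs]
  linarith [abs_sub_abs_le_abs_sub (f z) c, hfc z hz]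

lemma abs_setIntegral_sub_setIntegral_le {B : ℝ} (hst : s ⊆ t) (hs : MeasurableSet s)
    (ht : ν t ≠ ∞) (hg : IntegrableOn g t ν) (hB : ∀ z ∈ t, |g z| ≤ B) :
    |∫ z in t, g z ∂ν - ∫ z in s, g z ∂ν| ≤ B * ν.real (t \ s) := by
  rw [← setIntegral_sdiff hs hg hst, ← Real.norm_eq_abs]
  exact norm_setIntegral_le_of_norm_le_const ((measure_mono sdiff_subset).trans_lt ht.lt_top)
    fun z hz => (Real.norm_eq_abs _).trans_le (hB z hz.1)

lemma setIntegral_eq_measureReal_mul_setAverage (ht : ν t ≠ ∞) (hf : IntegrableOn f t ν) :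
    ∫ z in t, f z ∂ν = ν.real t * ⨍ z in t, f z ∂ν := by
  have h := setAverage_sub_setAverage ht f
  rwa [integral_sub hf (integrableOn_const ht), setIntegral_const, smul_eq_mul, sub_eq_zero] at h

lemma abs_setAverage_sub_le {c M : ℝ} (hs : MeasurableSet s) (hs0 : ν s ≠ 0) (hsfin : ν s ≠ ∞)
    (hf : IntegrableOn f s ν) (hfc : ∀ z ∈ s, |f z - c| ≤ M) : |⨍ z in s, f z ∂ν - c| ≤ M := by
  have hmem : ⨍ z in s, f z ∂ν ∈ Icc (c - M) (c + M) :=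
    Convex.set_average_mem (convex_Icc _ _) isClosed_Icc hs0 hsfin
      ((ae_restrict_iff' hs).2 (Eventually.of_forall fun z hz =>
        let h := abs_sub_le_iff.1 (hfc z hz); ⟨by linarith [h.2], by linarith [h.1]⟩)) hf
  exact abs_sub_le_iff.2 ⟨by linarith [hmem.2], by linarith [hmem.1]⟩

lemma setAverage_abs_sub_le_of_subset {c M : ℝ} (hst : s ⊆ t) (hs : MeasurableSet s)
    (ht_meas : MeasurableSet t) (hs0 : ν s ≠ 0) (ht : ν t ≠ ∞)
    (hf : AEStronglyMeasurable f (ν.restrict t)) (hfc : ∀ z ∈ t, |f z - c| ≤ M) :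
    ⨍ z in t, |f z - ⨍ w in t, f w ∂ν| ∂ν ≤
      ⨍ z in s, |f z - ⨍ w in s, f w ∂ν| ∂ν + 4 * M * (ν.real t - ν.real s) / ν.real t := by
  have hsfin : ν s ≠ ∞ := ne_top_of_le_ne_top ht (measure_mono hst)
  have hms : 0 < ν.real s := ENNReal.toReal_pos hs0 hsfin
  have hmt : 0 < ν.real t := hms.trans_le (measureReal_mono hst ht)
  have hfi : IntegrableOn f t ν := integrableOn_of_forall_abs_sub_le ht_meas ht hf hfc
  set a := ⨍ w in s, f w ∂ν
  set b := ⨍ w in t, f w ∂ν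
  have ha : |a - c| ≤ M :=
    abs_setAverage_sub_le hs hs0 hsfin (hfi.mono_set hst) fun z hz => hfc z (hst hz)
  have hfa : ∀ z ∈ t, |f z - a| ≤ 2 * M := fun z hz => by
    linarith [abs_sub_le (f z) c a, abs_sub_comm c a, hfc z hz]
  have hfai : IntegrableOn (fun z => f z - a) t ν := hfi.sub (integrableOn_const ht)
  have hshift : ν.real t * |b - a| ≤ 2 * M * ν.real (t \ s) := by
    have h := abs_setIntegral_sub_setIntegral_le hst hs ht hfai hfa
    have hint : ∫ z in t, (f z - a) ∂ν = ν.real t * (b - a) := by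
      rw [integral_sub hfi (integrableOn_const ht), setIntegral_const, smul_eq_mul,
        setIntegral_eq_measureReal_mul_setAverage ht hfi]
      ring
    rwa [setAverage_sub_setAverage hsfin, sub_zero, hint, abs_mul, abs_of_pos hmt] at h
  have hspread : ∫ z in t, |f z - a| ∂ν ≤ ∫ z in s, |f z - a| ∂ν + 2 * M * ν.real (t \ s) := by
    have h := abs_setIntegral_sub_setIntegral_le hst hs ht hfai.abs
      fun z hz => (abs_abs _).trans_le (hfa z hz)
    linarith [le_abs_self (∫ z in t, |f z - a| ∂ν - ∫ z in s, |f z - a| ∂ν)]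
  have htri : ∫ z in t, |f z - b| ∂ν ≤ ∫ z in t, |f z - a| ∂ν + ν.real t * |b - a| := by
    calc ∫ z in t, |f z - b| ∂ν ≤ ∫ z in t, (|f z - a| + |b - a|) ∂ν :=
          setIntegral_mono_on (hfi.sub (integrableOn_const ht)).abs
            (hfai.abs.add (integrableOn_const ht)) ht_meas
            fun z _ => by linarith [abs_sub_le (f z) a b, abs_sub_comm a b]
      _ = ∫ z in t, |f z - a| ∂ν + ν.real t * |b - a| := by
          rw [integral_add hfai.abs (integrableOn_const ht), setIntegral_const, smul_eq_mul]
  have hI : 0 ≤ ∫ z in s, |f z - a| ∂ν := integral_nonneg fun _ => abs_nonneg _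
  rw [measureReal_sdiff hst hs ht] at hshift hspread
  rw [setAverage_eq, setAverage_eq, smul_eq_mul, smul_eq_mul]
  calc (ν.real t)⁻¹ * ∫ z in t, |f z - b| ∂ν
      ≤ (ν.real t)⁻¹ * (∫ z in s, |f z - a| ∂ν + 4 * M * (ν.real t - ν.real s)) := by
        gcongr
        linarith
    _ = (ν.real t)⁻¹ * ∫ z in s, |f z - a| ∂ν + 4 * M * (ν.real t - ν.real s) / ν.real t := by
        ring
    _ ≤ (ν.real s)⁻¹ * ∫ z in s, |f z - a| ∂ν + 4 * M * (ν.real t - ν.real s) / ν.real t := by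
        gcongr

lemma setAverage_le_setIntegral_div {u : Set α} (hus : u ⊆ s) (hst : s ⊆ t) (hsfin : ν s ≠ ∞)
    (hu : 0 < ν.real u) (hg0 : ∀ z, 0 ≤ g z) (hg : IntegrableOn g t ν) :
    ⨍ z in s, g z ∂ν ≤ (∫ z in t, g z ∂ν) / ν.real u := by
  rw [setAverage_eq, smul_eq_mul, inv_mul_eq_div]
  exact div_le_div₀ (integral_nonneg fun z => hg0 z)
    (setIntegral_mono_set hg (Eventually.of_forall fun z => hg0 z) (Eventually.of_forall hst))
    hu (measureReal_mono hus hsfin)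

end Averages

section Balls

variable {Y : Type*} [PseudoMetricSpace Y] [MeasurableSpace Y] {ν : Measure Y}

lemma tendsto_measure_ball_nhdsLT (ν : Measure Y) (y : Y) (R : ℝ) :
    Tendsto (fun t => ν (ball y t)) (𝓝[<] R) (𝓝 (ν (ball y R))) := by
  rw [← tendsto_comp_coe_Iio_atTop, ← biUnion_lt_ball y R]
  have hmono : Monotone fun t : Iio R => ball y t := fun _ _ hst => ball_subset_ball hst
  simpa only [iUnion_subtype, mem_Iio, Function.comp_def] using
    tendsto_measure_iUnion_atTop (μ := ν) hmono

lemma tendsto_measureReal_ball_sub_mul (y : Y) {R c : ℝ} (hc : 0 < c) (hR : ν (ball y R) ≠ ∞) :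
    Tendsto (fun δ => ν.real (ball y (R - c * δ))) (𝓝[>] 0) (𝓝 (ν.real (ball y R))) := by
  have hlin : Tendsto (fun δ => R - c * δ) (𝓝[>] 0) (𝓝[<] R) := by
    refine tendsto_nhdsWithin_of_tendsto_nhds_of_eventually_within _ ?_
      (eventually_mem_nhdsWithin.mono fun δ (hδ : 0 < δ) => ?_)
    · have h : Continuous fun δ : ℝ => R - c * δ := by fun_prop
      simpa using h.tendsto' 0 (R - c * 0) rfl |>.mono_left nhdsWithin_le_nhds
    · simpa using mul_pos hc hδ
  exact (ENNReal.tendsto_toReal hR).comp ((tendsto_measure_ball_nhdsLT ν y R).comp hlin)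

end Balls

section DenseBalls

variable {Y : Type*} [MetricSpace Y] [MeasurableSpace Y] {ν : Measure Y} {D : Set Y}

lemma measure_ball_pos_lt_top_of_dense (hD : Dense D)
    (h : ∀ x ∈ D, ∀ r, 0 < r → 0 < ν (ball x r) ∧ ν (ball x r) < ∞) :
    ∀ y r, 0 < r → 0 < ν (ball y r) ∧ ν (ball y r) < ∞ := by
  intro y r hr
  obtain ⟨x, hxy, hxD⟩ := Metric.dense_iff.1 hD y (r / 2) (half_pos hr)
  rw [mem_ball] at hxy
  refine ⟨(h x hxD _ (half_pos hr)).1.trans_le (measure_mono (ball_subset_ball' ?_)),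
    (measure_mono (ball_subset_ball' ?_)).trans_lt (h x hxD (2 * r) (by positivity)).2⟩
  · linarith
  · rw [dist_comm]; linarith

lemma doublingWith_of_dense {C : ℝ≥0} (hD : Dense D)
    (h : ∀ x ∈ D, ∀ r, 0 < r → ν (ball x (2 * r)) ≤ C * ν (ball x r)) : DoublingWith ν C := by
  intro y r hr
  refine le_of_tendsto (tendsto_measure_ball_nhdsLT ν y (2 * r)) ?_
  filter_upwards [Ioo_mem_nhdsLT (show r < 2 * r by linarith)] with t ⟨hrt, ht⟩
  set ε := (2 * r - t) / 3 with hε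
  obtain ⟨x, hxy, hxD⟩ := Metric.dense_iff.1 hD y ε (by positivity)
  rw [mem_ball] at hxy
  calc ν (ball y t) ≤ ν (ball x (2 * (r - ε))) :=
        measure_mono (ball_subset_ball' (by rw [dist_comm]; linarith))
    _ ≤ C * ν (ball x (r - ε)) := h x hxD _ (by linarith)
    _ ≤ C * ν (ball y r) := by gcongr; exact ball_subset_ball' (by linarith)

end DenseBalls

/-- The inequality of `PoincareIneq` on the single ball `B(x,r)`. -/
def PoincareAt {X : Type*} [MetricSpace X] [MeasurableSpace X] (μ : Measure X) (p L : ℝ)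
    (f : X → ℝ) (x : X) (r : ℝ) : Prop :=
  ⨍ y in ball x r, |f y - ⨍ z in ball x r, f z ∂μ| ∂μ ≤
    L * r * (⨍ z in ball x (L * r), (lipLow f z) ^ p ∂μ) ^ (1 / p)

section PushForward

variable {X Y : Type*} [MetricSpace X] [MeasurableSpace X] [MetricSpace Y] [MeasurableSpace Y]
  [OpensMeasurableSpace Y] {μ : Measure X} {ι : X → Y}

lemma map_apply_ball (hι : Isometry ι) (hιm : Measurable ι) (x : X) (r : ℝ) :
    μ.map ι (ball (ι x) r) = μ (ball x r) := by
  rw [Measure.map_apply hιm measurableSet_ball, hι.preimage_ball]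

lemma setAverage_map_ball (hι : Isometry ι) (hιm : Measurable ι) {h : Y → ℝ} (hh : Measurable h)
    (x : X) (r : ℝ) : ⨍ y in ball (ι x) r, h y ∂μ.map ι = ⨍ z in ball x r, h (ι z) ∂μ := by
  rw [setAverage_eq, setAverage_eq, Measure.restrict_map hιm measurableSet_ball,
    integral_map hιm.aemeasurable hh.aestronglyMeasurable, hι.preimage_ball, measureReal_def,
    measureReal_def, map_apply_ball hι hιm]

lemma poincareAt_map_of_comp (hι : Isometry ι) (hιm : Measurable ι)
    (hd : DenseRange ι) {f : Y → ℝ} {K : ℝ≥0} (hf : LipschitzWith K f) {p L : ℝ} {x : X} {r : ℝ}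
    (h : PoincareAt μ p L (f ∘ ι) x r) : PoincareAt (μ.map ι) p L f (ι x) r := by
  have hfm : Measurable f := hf.continuous.measurable
  unfold PoincareAt at h ⊢
  rw [setAverage_map_ball hι hιm hfm, setAverage_map_ball hι hιm (hfm.sub_const _).abs,
    setAverage_map_ball hι hιm ((measurable_lipLow hf).pow_const p)]
  simp only [lipLow_comp_isometry hι hd hf] at h
  exact h

end PushForward

section DenseCenters

variable {Y : Type*} [MetricSpace Y] [MeasurableSpace Y] [OpensMeasurableSpace Y] {ν : Measure Y}
  {f : Y → ℝ} {K : ℝ≥0} {p L : ℝ}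

lemma integrableOn_lipLow_rpow (hf : LipschitzWith K f) (hp : 0 < p) {s : Set Y}
    (hs : MeasurableSet s) (hsfin : ν s ≠ ∞) : IntegrableOn (fun z => lipLow f z ^ p) s ν :=
  integrableOn_of_forall_abs_sub_le (c := 0) (M := K ^ p) hs hsfin
    ((measurable_lipLow hf).pow_const p).aestronglyMeasurable fun z _ => by
      rw [sub_zero, abs_of_nonneg (Real.rpow_nonneg (lipLow_nonneg hf z) p)]
      exact Real.rpow_le_rpow (lipLow_nonneg hf z) (lipLow_le hf z) hp.le

/-- `B(y,r)` is approximated from inside by `B(x, r - δ)` for some `x ∈ D` within `δ` of `y`. -/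
lemma poincareAt_error_bound (hball : ∀ y r, 0 < r → 0 < ν (ball y r) ∧ ν (ball y r) < ∞)
    {D : Set Y} (hD : Dense D) (hf : LipschitzWith K f) (hp : 0 < p)
    (hL : 1 ≤ L) (h : ∀ x ∈ D, ∀ s, 0 < s → PoincareAt ν p L f x s) {y : Y} {r δ : ℝ}
    (hδ : 0 < δ) (hδr : δ < r / 4) :
    ⨍ z in ball y r, |f z - ⨍ w in ball y r, f w ∂ν| ∂ν ≤
      L * r * ((∫ z in ball y (L * r), lipLow f z ^ p ∂ν) /
          ν.real (ball y (L * r - (L + 1) * δ))) ^ (1 / p) +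
        4 * (K * r) * (ν.real (ball y r) - ν.real (ball y (r - 2 * δ))) / ν.real (ball y r) := by
  have hr : 0 < r := by linarith
  obtain ⟨x, hxy, hxD⟩ := Metric.dense_iff.1 hD y δ hδ
  rw [mem_ball] at hxy
  set s := r - δ
  have hs : 0 < s := by linarith
  have hball_sub : ball x s ⊆ ball y r := ball_subset_ball' (by linarith)
  have hball_sup : ball y (r - 2 * δ) ⊆ ball x s :=
    ball_subset_ball' (by rw [dist_comm]; linarith)
  have hLball_sub : ball x (L * s) ⊆ ball y (L * r) := ball_subset_ball' (by nlinarith)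
  have hLball_sup : ball y (L * r - (L + 1) * δ) ⊆ ball x (L * s) :=
    ball_subset_ball' (by rw [dist_comm]; nlinarith)
  have hinner_pos : 0 < ν.real (ball y (L * r - (L + 1) * δ)) := by
    have := hball y (L * r - (L + 1) * δ) (by nlinarith)
    exact ENNReal.toReal_pos this.1.ne' this.2.ne
  have hosc := setAverage_abs_sub_le_of_subset (c := f y) (M := K * r) hball_sub
    measurableSet_ball measurableSet_ball (hball x s hs).1.ne' (hball y r hr).2.ne
    hf.continuous.measurable.aestronglyMeasurable fun z hz => by
      have := abs_sub_div_le_of_mem_ball hf hz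
      rwa [div_le_iff₀ hr] at this
  have havg := setAverage_le_setIntegral_div hLball_sup hLball_sub
    (hball x (L * s) (by positivity)).2.ne hinner_pos
    (fun z => Real.rpow_nonneg (lipLow_nonneg hf z) p)
    (integrableOn_lipLow_rpow hf hp measurableSet_ball (hball y (L * r) (by positivity)).2.ne)
  have hmeas : ν.real (ball y (r - 2 * δ)) ≤ ν.real (ball x s) :=
    measureReal_mono hball_sup (hball x s hs).2.ne
  have havg_nonneg : 0 ≤ ⨍ z in ball x (L * s), lipLow f z ^ p ∂ν := by
    rw [setAverage_eq, smul_eq_mul]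
    exact mul_nonneg (inv_nonneg.2 measureReal_nonneg)
      (integral_nonneg fun z => Real.rpow_nonneg (lipLow_nonneg hf z) p)
  refine hosc.trans (add_le_add ((h x hxD s hs).trans ?_) (by gcongr))
  gcongr
  linarith

lemma poincareAt_of_dense (hball : ∀ y r, 0 < r → 0 < ν (ball y r) ∧ ν (ball y r) < ∞)
    {D : Set Y} (hD : Dense D) (hf : LipschitzWith K f) (hp : 0 < p) (hL : 1 ≤ L)
    (h : ∀ x ∈ D, ∀ s, 0 < s → PoincareAt ν p L f x s) {y : Y} {r : ℝ} (hr : 0 < r) :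
    PoincareAt ν p L f y r := by
  have hLr : 0 < L * r := by positivity
  have hpos : ∀ R, 0 < R → 0 < ν.real (ball y R) := fun R hR =>
    ENNReal.toReal_pos (hball y R hR).1.ne' (hball y R hR).2.ne
  set T := ∫ z in ball y (L * r), lipLow f z ^ p ∂ν
  have hlim : Tendsto (fun δ => L * r * (T / ν.real (ball y (L * r - (L + 1) * δ))) ^ (1 / p) +
        4 * (K * r) * (ν.real (ball y r) - ν.real (ball y (r - 2 * δ))) / ν.real (ball y r))
      (𝓝[>] 0) (𝓝 (L * r * (T / ν.real (ball y (L * r))) ^ (1 / p) +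
        4 * (K * r) * (ν.real (ball y r) - ν.real (ball y r)) / ν.real (ball y r))) := by
    refine ((Real.continuousAt_rpow_const _ _ (Or.inr (by positivity))).tendsto.comp
      (tendsto_const_nhds.div (tendsto_measureReal_ball_sub_mul y (by linarith)
        (hball y _ hLr).2.ne) (hpos _ hLr).ne') |>.const_mul _).add
      (((tendsto_const_nhds.sub (tendsto_measureReal_ball_sub_mul y two_pos
        (hball y r hr).2.ne)).const_mul _).div_const _)
  have hbound := ge_of_tendsto hlim <| by
    filter_upwards [Ioo_mem_nhdsGT (show 0 < r / 4 by positivity)] with δ ⟨hδ, hδr⟩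
    exact poincareAt_error_bound hball hD hf hp hL h hδ hδr
  rw [sub_self, mul_zero, zero_div, add_zero] at hbound
  rwa [PoincareAt, setAverage_eq (μ := ν) (fun z => lipLow f z ^ p), smul_eq_mul,
    inv_mul_eq_div]

end DenseCenters

/-- the completion `X̄` of a doubling `p`-Poincaré space `X`, equipped with
the measure `μ̄(Y) = μ(Y ∩ X)`, is doubling and satisfies a `p`-Poincaré inequality, with
constants depending only on the original constants. -/
theorem completion_doubling_and_poincare
    (Cμ : ℝ≥0) (L p : ℝ) (hL : 1 ≤ L) (hp : 1 ≤ p) :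
    ∃ (C' : ℝ≥0) (L' : ℝ), 1 ≤ L' ∧
      ∀ (X : Type) [MetricSpace X] [MeasurableSpace X] [BorelSpace X] (μ : Measure X),
        DoublingWith μ Cμ → PoincareIneq μ p L →
        letI : MeasurableSpace (UniformSpace.Completion X) :=
          borel (UniformSpace.Completion X)
        letI : BorelSpace (UniformSpace.Completion X) := ⟨rfl⟩
        ∀ ν : Measure (UniformSpace.Completion X),
          (∀ Y : Set (UniformSpace.Completion X), MeasurableSet Y →
            ν Y = μ ((fun x : X => (x : UniformSpace.Completion X)) ⁻¹' Y)) →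
          DoublingWith ν C' ∧ PoincareIneq ν p L' := by
  refine ⟨Cμ, L, hL, fun X _ _ _ μ hD hP => ?_⟩
  let := borel (UniformSpace.Completion X)
  have : BorelSpace (UniformSpace.Completion X) := ⟨rfl⟩
  intro ν hν
  have hι : Isometry ((↑) : X → UniformSpace.Completion X) := UniformSpace.Completion.coe_isometry
  have hιm := (UniformSpace.Completion.continuous_coe X).measurable
  have hd := UniformSpace.Completion.denseRange_coe (α := X)
  obtain rfl : ν = μ.map (↑) := Measure.ext fun s hs => by rw [Measure.map_apply hιm hs, hν s hs]
  have hball := measure_ball_pos_lt_top_of_dense hd <| forall_mem_range.2 fun x r hr => by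
    rw [map_apply_ball hι hιm]
    exact hP.1 x r hr
  refine ⟨doublingWith_of_dense hd (forall_mem_range.2 fun x r hr => ?_), hball,
    fun f ⟨K, hf⟩ y r hr => ?_⟩
  · rw [map_apply_ball hι hιm, map_apply_ball hι hιm]
    exact hD x r hr
  · refine poincareAt_of_dense hball hd hf (by linarith) hL
      (forall_mem_range.2 fun x s hs => ?_) hr
    exact poincareAt_map_of_comp hι hιm hd hf (hP.2 _ ⟨K * 1, hf.comp hι.lipschitz⟩ x s hs)
end

section
/- Let (X,d,μ) be a complete metric measure space with μ Borel regular and doubling, admitting a p-Poincaré inequality with constant L ≥ 1 for some p ≥ 1. Then there is a constant C < ∞, depending only on the doubling constant, L and p, such that for all p₀, q₀ ∈ X with r = d(p₀,q₀) > 0, there is a rectifiable curve of length at most C·r whose initial point lies in B(p₀, r/4) and whose terminal point lies in B(q₀, r/4). -/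
open Metric MeasureTheory Filter Set
open scoped NNReal ENNReal

open scoped Topology

/-!
For `ε > 0` let `f` be the length of the shortest `ε`-chain from `p₀`, truncated at a level `M`.
It is `1`-Lipschitz at scales `≤ ε` and bounded, hence Lipschitz with `lip f ≤ 1` everywhere, so
the Poincaré inequality bounds its mean oscillation on every ball `B(z, s)` by `L s`. Telescoping
over the dyadic balls `B(z, 2⁻ᵏ s)` down to scale `ε` and comparing balls around `p₀` and `q₀`
with the doubling condition gives `|f p₀ - f q₀| ≤ (3 + 8 C² L) d(p₀, q₀)`; so, choosing `M`
slightly larger, there are `ε`-chains from `p₀` to `q₀` of length `≤ (4 + 8 C² L) d(p₀, q₀)`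
for every `ε`. A complete doubling space is proper, and a pointwise ultrafilter limit of these
chains, parametrised by arclength, is a Lipschitz curve from `p₀` to `q₀`.
-/

section Chains

variable {X : Type*} [PseudoMetricSpace X]

def chainLength (c : ℕ → X) (n : ℕ) : ℝ := ∑ i ∈ Finset.range n, dist (c i) (c (i + 1))

def IsEpsChain (ε : ℝ) (c : ℕ → X) (n : ℕ) (x y : X) : Prop :=
  c 0 = x ∧ c n = y ∧ ∀ i < n, dist (c i) (c (i + 1)) ≤ ε

noncomputable def chainDist (ε : ℝ) (x y : X) : ℝ≥0∞ :=
  ⨅ (n : ℕ) (c : ℕ → X) (_ : IsEpsChain ε c n x y), ENNReal.ofReal (chainLength c n)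

lemma chainLength_nonneg (c : ℕ → X) (n : ℕ) : 0 ≤ chainLength c n :=
  Finset.sum_nonneg fun _ _ => dist_nonneg

lemma chainLength_succ (c : ℕ → X) (n : ℕ) :
    chainLength c (n + 1) = chainLength c n + dist (c n) (c (n + 1)) :=
  Finset.sum_range_succ _ _

lemma dist_le_chainLength_sub (c : ℕ → X) {i j : ℕ} (hij : i ≤ j) :
    dist (c i) (c j) ≤ chainLength c j - chainLength c i := by
  induction j, hij using Nat.le_induction with
  | base => simp
  | succ j _ ih =>
    rw [chainLength_succ]
    linarith [dist_triangle (c i) (c j) (c (j + 1))]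

lemma chainLength_mono (c : ℕ → X) {i j : ℕ} (hij : i ≤ j) :
    chainLength c i ≤ chainLength c j :=
  sub_nonneg.mp (dist_nonneg.trans (dist_le_chainLength_sub c hij))

lemma IsEpsChain.snoc {ε : ℝ} {c : ℕ → X} {n : ℕ} {x z y : X} (hc : IsEpsChain ε c n x z)
    (hzy : dist z y ≤ ε) :
    IsEpsChain ε (Function.update c (n + 1) y) (n + 1) x y ∧
      chainLength (Function.update c (n + 1) y) (n + 1) = chainLength c n + dist z y := by
  obtain ⟨h0, hn, hstep⟩ := hc
  have hlow : ∀ i ≤ n, Function.update c (n + 1) y i = c i := fun i hi =>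
    Function.update_of_ne (by omega) _ _
  refine ⟨⟨by rw [hlow 0 (Nat.zero_le n), h0], by simp, fun i hi => ?_⟩, ?_⟩
  · rcases Nat.lt_succ_iff_lt_or_eq.mp hi with hi | rfl
    · rw [hlow i hi.le, hlow (i + 1) hi]; exact hstep i hi
    · rw [hlow i le_rfl, hn]; simpa using hzy
  · rw [chainLength_succ, hlow n le_rfl, hn, Function.update_self]
    congr 1
    exact Finset.sum_congr rfl fun i hi => by
      rw [hlow i (Finset.mem_range.mp hi).le, hlow (i + 1) (Finset.mem_range.mp hi)]

lemma chainDist_le {ε : ℝ} {c : ℕ → X} {n : ℕ} {x y : X} (hc : IsEpsChain ε c n x y) :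
    chainDist ε x y ≤ ENNReal.ofReal (chainLength c n) :=
  iInf₂_le_of_le n c (iInf_le _ hc)

lemma chainDist_self (ε : ℝ) (x : X) : chainDist ε x x = 0 :=
  nonpos_iff_eq_zero.mp <| (chainDist_le (c := fun _ => x) (n := 0) ⟨rfl, rfl, by simp⟩).trans
    (by simp [chainLength])

lemma chainDist_le_add_dist {ε : ℝ} (x : X) {z y : X} (hzy : dist z y ≤ ε) :
    chainDist ε x y ≤ chainDist ε x z + ENNReal.ofReal (dist z y) := by
  simp only [chainDist, ENNReal.iInf_add]
  refine le_iInf₂ fun n c => le_iInf fun hc => ?_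
  obtain ⟨hc', hlen⟩ := hc.snoc hzy
  calc ⨅ (m : ℕ) (c : ℕ → X) (_ : IsEpsChain ε c m x y), ENNReal.ofReal (chainLength c m)
      ≤ ENNReal.ofReal (chainLength (Function.update c (n + 1) y) (n + 1)) := chainDist_le hc'
    _ = ENNReal.ofReal (chainLength c n) + ENNReal.ofReal (dist z y) := by
      rw [hlen, ENNReal.ofReal_add (chainLength_nonneg c n) dist_nonneg]

lemma exists_isEpsChain_of_chainDist_lt {ε M : ℝ} {x y : X}
    (h : chainDist ε x y < ENNReal.ofReal M) :
    ∃ n c, IsEpsChain ε c n x y ∧ chainLength c n < M := by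
  simp only [chainDist, iInf_lt_iff] at h
  obtain ⟨n, c, hc, hlt⟩ := h
  exact ⟨n, c, hc, (ENNReal.ofReal_lt_ofReal_iff'.mp hlt).1⟩

end Chains

section ShortAtScale

variable {X : Type*} [PseudoMetricSpace X]

def ShortAtScale (ε : ℝ) (f : X → ℝ) : Prop := ∀ z w, dist z w ≤ ε → |f z - f w| ≤ dist z w

lemma ShortAtScale.lipschitzWith {ε M : ℝ} {f : X → ℝ} (hε : 0 < ε) (hf : ShortAtScale ε f)
    (hM : ∀ z w, |f z - f w| ≤ M) : LipschitzWith (max 1 (M / ε)).toNNReal f := by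
  refine LipschitzWith.of_dist_le_mul fun z w => ?_
  rw [Real.dist_eq, Real.coe_toNNReal _ (zero_le_one.trans (le_max_left _ _))]
  rcases le_or_gt (dist z w) ε with hzw | hzw
  · exact (hf z w hzw).trans (le_mul_of_one_le_left dist_nonneg (le_max_left _ _))
  · calc |f z - f w| ≤ M / ε * ε := by rw [div_mul_cancel₀ _ hε.ne']; exact hM z w
      _ ≤ max 1 (M / ε) * dist z w :=
        mul_le_mul (le_max_right _ _) hzw.le hε.le (zero_le_one.trans (le_max_left _ _))

end ShortAtScale

section TruncatedChainDist

variable {X : Type*} [PseudoMetricSpace X]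

noncomputable def truncChainDist (ε M : ℝ) (x z : X) : ℝ :=
  (min (chainDist ε x z) (ENNReal.ofReal M)).toReal

variable {ε M : ℝ}

lemma truncChainDist_mem_Icc (hM : 0 ≤ M) (x z : X) : truncChainDist ε M x z ∈ Icc 0 M :=
  ⟨ENNReal.toReal_nonneg, (ENNReal.toReal_mono ENNReal.ofReal_ne_top (min_le_right _ _)).trans
    (ENNReal.toReal_ofReal hM).le⟩

lemma truncChainDist_self (x : X) : truncChainDist ε M x x = 0 := by
  simp [truncChainDist, chainDist_self]

lemma chainDist_lt_of_truncChainDist_lt {x y : X} (h : truncChainDist ε M x y < M) :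
    chainDist ε x y < ENNReal.ofReal M := by
  by_contra! hge
  rw [truncChainDist, min_eq_right hge] at h
  exact h.ne (ENNReal.toReal_ofReal ((ENNReal.toReal_nonneg).trans h.le))

lemma truncChainDist_le_add_dist (x : X) {z y : X} (hzy : dist z y ≤ ε) :
    truncChainDist ε M x y ≤ truncChainDist ε M x z + dist z y := by
  have hfin : min (chainDist ε x z) (ENNReal.ofReal M) ≠ ⊤ :=
    ne_top_of_le_ne_top ENNReal.ofReal_ne_top (min_le_right _ _)
  calc truncChainDist ε M x y
      ≤ (min (chainDist ε x z + ENNReal.ofReal (dist z y)) (ENNReal.ofReal M)).toReal :=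
        ENNReal.toReal_mono (ne_top_of_le_ne_top ENNReal.ofReal_ne_top (min_le_right _ _))
          (min_le_min_right _ (chainDist_le_add_dist x hzy))
    _ ≤ (min (chainDist ε x z) (ENNReal.ofReal M) + ENNReal.ofReal (dist z y)).toReal := by
        refine ENNReal.toReal_mono (by finiteness) ?_
        rw [← min_add_add_right]
        exact min_le_min_left _ le_self_add
    _ = truncChainDist ε M x z + dist z y := by
        rw [ENNReal.toReal_add hfin ENNReal.ofReal_ne_top, ENNReal.toReal_ofReal dist_nonneg]
        rfl

lemma shortAtScale_truncChainDist (x : X) : ShortAtScale ε (truncChainDist ε M x) := by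
  intro z w hzw
  rw [abs_sub_le_iff]
  constructor
  · linarith [truncChainDist_le_add_dist (M := M) x (by rwa [dist_comm] : dist w z ≤ ε),
      dist_comm z w]
  · linarith [truncChainDist_le_add_dist (M := M) x hzw]

end TruncatedChainDist

section LowerLipschitzConstant

variable {X : Type*} [MetricSpace X]

lemma varBall_nonneg_s16 (f : X → ℝ) (z : X) {r : ℝ} (hr : 0 < r) : 0 ≤ varBall f z r :=
  Real.sSup_nonneg <| by rintro t ⟨y, _, rfl⟩; positivity

lemma ShortAtScale.varBall_le_one {ε : ℝ} {f : X → ℝ} (hf : ShortAtScale ε f) (z : X) {r : ℝ}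
    (hr : 0 < r) (hrε : r ≤ ε) : varBall f z r ≤ 1 := by
  refine Real.sSup_le ?_ zero_le_one
  rintro t ⟨y, hy, rfl⟩
  have hzy : dist z y < r := mem_ball'.mp hy
  rw [div_le_one hr, abs_sub_comm]
  exact (hf z y (hzy.le.trans hrε)).trans hzy.le

lemma ShortAtScale.lipLow_mem_Icc {ε : ℝ} {f : X → ℝ} (hε : 0 < ε) (hf : ShortAtScale ε f)
    (z : X) : lipLow f z ∈ Icc 0 1 := by
  have hsmall : Ioc (0 : ℝ) ε ∈ 𝓝[>] 0 := Ioc_mem_nhdsGT hε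
  have hle : ∀ᶠ r in 𝓝[>] 0, varBall f z r ≤ 1 :=
    eventually_of_mem hsmall fun r hr => hf.varBall_le_one z hr.1 hr.2
  have hge : ∀ᶠ r in 𝓝[>] 0, 0 ≤ varBall f z r :=
    eventually_of_mem hsmall fun r hr => varBall_nonneg_s16 f z hr.1
  exact ⟨le_liminf_of_le (isCoboundedUnder_ge_of_eventually_le _ hle) hge,
    liminf_le_of_frequently_le hle.frequently ⟨0, hge⟩⟩

end LowerLipschitzConstant

section Averages

variable {α : Type*} [MeasurableSpace α] {μ : Measure α} {s t : Set α}

lemma setAverage_nonneg {g : α → ℝ} (hg : ∀ x, 0 ≤ g x) : 0 ≤ ⨍ x in s, g x ∂μ := by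
  rw [setAverage_eq, smul_eq_mul]
  exact mul_nonneg (inv_nonneg.mpr measureReal_nonneg) (integral_nonneg hg)

lemma setAverage_le_of_forall_le {g : α → ℝ} {c : ℝ} (hs : MeasurableSet s) (hs' : μ s ≠ ⊤)
    (hc : 0 ≤ c) (h0 : ∀ x, 0 ≤ g x) (hgc : ∀ x ∈ s, g x ≤ c) : ⨍ x in s, g x ∂μ ≤ c := by
  rw [setAverage_eq, smul_eq_mul]
  have hint : ∫ x in s, g x ∂μ ≤ μ.real s * c := by
    calc ∫ x in s, g x ∂μ ≤ ∫ _ in s, c ∂μ :=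
          integral_mono_of_nonneg (.of_forall h0) (integrableOn_const hs')
            (ae_restrict_of_forall_mem hs hgc)
      _ = μ.real s * c := by rw [setIntegral_const, smul_eq_mul]
  rcases (measureReal_nonneg (μ := μ) (s := s)).eq_or_lt with h | h
  · rw [← h, inv_zero, zero_mul]; exact hc
  · rw [inv_mul_le_iff₀ h]; exact hint

lemma abs_setAverage_sub_le_s16 {f : α → ℝ} (hst : s ⊆ t) (hs : μ s ≠ 0) (ht : μ t ≠ ⊤)
    (hf : IntegrableOn f t μ) (c : ℝ) :
    |(⨍ x in s, f x ∂μ) - c| ≤ μ.real t / μ.real s * ⨍ x in t, |f x - c| ∂μ := by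
  have hs' : μ s ≠ ⊤ := ne_top_of_le_ne_top ht (measure_mono hst)
  have hs0 : 0 < μ.real s := ENNReal.toReal_pos hs hs'
  have ht0 : 0 < μ.real t :=
    hs0.trans_le (ENNReal.toReal_mono ht (measure_mono hst))
  have hfc : IntegrableOn (fun x => f x - c) t μ := hf.sub (integrableOn_const ht)
  have havg : (⨍ x in s, f x ∂μ) - c = (μ.real s)⁻¹ * ∫ x in s, (f x - c) ∂μ := by
    rw [setAverage_eq, smul_eq_mul, integral_sub (hf.mono_set hst) (integrableOn_const hs'),
      setIntegral_const, smul_eq_mul]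
    field_simp
  calc |(⨍ x in s, f x ∂μ) - c| = (μ.real s)⁻¹ * |∫ x in s, (f x - c) ∂μ| := by
        rw [havg, abs_mul, abs_of_pos (inv_pos.mpr hs0)]
    _ ≤ (μ.real s)⁻¹ * ∫ x in s, |f x - c| ∂μ := by gcongr; exact abs_integral_le_integral_abs
    _ ≤ (μ.real s)⁻¹ * ∫ x in t, |f x - c| ∂μ := mul_le_mul_of_nonneg_left
        (setIntegral_mono_set hfc.abs (.of_forall fun _ => abs_nonneg _) hst.eventuallyLE)
        (inv_nonneg.mpr hs0.le)
    _ = μ.real t / μ.real s * ⨍ x in t, |f x - c| ∂μ := by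
        rw [setAverage_eq, smul_eq_mul]
        field_simp

end Averages

section Doubling

variable {X : Type*} [MetricSpace X] [MeasurableSpace X] {μ : Measure X} {C : ℝ≥0}

lemma DoublingWith.mono {C' : ℝ≥0} (hD : DoublingWith μ C) (hC : C ≤ C') : DoublingWith μ C' :=
  fun x r hr => (hD x r hr).trans (by gcongr)

lemma DoublingWith.measure_ball_two_pow_mul_le (hD : DoublingWith μ C) (x : X) {r : ℝ}
    (hr : 0 < r) (k : ℕ) : μ (ball x (2 ^ k * r)) ≤ (C : ℝ≥0∞) ^ k * μ (ball x r) := by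
  induction k with
  | zero => simp
  | succ k ih =>
    calc μ (ball x (2 ^ (k + 1) * r)) = μ (ball x (2 * (2 ^ k * r))) := by ring_nf
      _ ≤ C * μ (ball x (2 ^ k * r)) := hD x _ (by positivity)
      _ ≤ C * (C ^ k * μ (ball x r)) := by gcongr
      _ = C ^ (k + 1) * μ (ball x r) := by ring

lemma DoublingWith.measureReal_ball_two_mul_le (hD : DoublingWith μ C) (x : X) {r : ℝ}
    (hr : 0 < r) (hfin : μ (ball x r) ≠ ⊤) :
    μ.real (ball x (2 * r)) ≤ C * μ.real (ball x r) := by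
  simpa [measureReal_def, ENNReal.toReal_mul] using
    ENNReal.toReal_mono (by finiteness) (hD x r hr)

lemma DoublingWith.one_le (hD : DoublingWith μ C) (x : X) {r : ℝ} (hr : 0 < r)
    (h0 : μ (ball x r) ≠ 0) (hfin : μ (ball x r) ≠ ⊤) : 1 ≤ C := by
  have h : 1 * μ (ball x r) ≤ C * μ (ball x r) := by
    rw [one_mul]
    exact (measure_mono (ball_subset_ball (by linarith))).trans (hD x r hr)
  exact_mod_cast (ENNReal.mul_le_mul_iff_left h0 hfin).mp h

lemma DoublingWith.measure_ball_le_pow_mul (hD : DoublingWith μ C) {x z : X} {R δ : ℝ}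
    (hz : z ∈ ball x R) (hδ : 0 < δ) {k : ℕ} (hk : 2 * R ≤ 2 ^ k * δ) :
    μ (ball x R) ≤ (C : ℝ≥0∞) ^ k * μ (ball z δ) :=
  calc μ (ball x R) ≤ μ (ball z (2 ^ k * δ)) := measure_mono fun w hw => by
        rw [mem_ball] at hw hz ⊢; linarith [dist_triangle w x z, dist_comm x z]
    _ ≤ (C : ℝ≥0∞) ^ k * μ (ball z δ) := hD.measure_ball_two_pow_mul_le z hδ k

end Doubling

section Telescoping

variable {X : Type*} [MetricSpace X] [MeasurableSpace X] [OpensMeasurableSpace X]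
  {μ : Measure X} {C : ℝ≥0} {ε K : ℝ} {f : X → ℝ}

lemma abs_sub_setAverage_ball_le (hD : DoublingWith μ C)
    (hμ : ∀ x r, 0 < r → 0 < μ (ball x r) ∧ μ (ball x r) < ⊤) (hε : 0 < ε)
    (hf : ShortAtScale ε f) (hint : ∀ x r, 0 < r → IntegrableOn f (ball x r) μ)
    (hosc : ∀ x r, 0 < r → ⨍ y in ball x r, |f y - ⨍ z in ball x r, f z ∂μ| ∂μ ≤ K * r)
    (z : X) {s : ℝ} (hs : 0 < s) :
    |f z - ⨍ y in ball z s, f y ∂μ| ≤ (1 + 2 * C * K) * s := by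
  have hK : 0 ≤ K := by
    simpa using (setAverage_nonneg fun _ => abs_nonneg _).trans (hosc z 1 one_pos)
  have hpos : ∀ s, 0 < s → 0 < μ.real (ball z s) := fun s hs =>
    ENNReal.toReal_pos (hμ z s hs).1.ne' (hμ z s hs).2.ne
  suffices h : ∀ n : ℕ, ∀ s, 0 < s → s ≤ 2 ^ n * ε →
      |f z - ⨍ y in ball z s, f y ∂μ| ≤ (1 + 2 * C * K) * s by
    obtain ⟨n, hn⟩ := pow_unbounded_of_one_lt (s / ε) (one_lt_two (α := ℝ))
    exact h n s hs ((div_le_iff₀ hε).mp hn.le)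
  intro n
  induction n with
  | zero =>
    intro s hs hsε
    have hcmp := abs_setAverage_sub_le_s16 subset_rfl (hμ z s hs).1.ne' (hμ z s hs).2.ne
      (hint z s hs) (f z)
    rw [div_self (hpos s hs).ne', one_mul] at hcmp
    have hnear : ⨍ y in ball z s, |f y - f z| ∂μ ≤ s := by
      refine setAverage_le_of_forall_le measurableSet_ball (hμ z s hs).2.ne hs.le
        (fun _ => abs_nonneg _) fun y hy => ?_
      have hzy : dist z y < s := mem_ball'.mp hy
      rw [abs_sub_comm]
      exact (hf z y (hzy.le.trans (by simpa using hsε))).trans hzy.le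
    calc |f z - ⨍ y in ball z s, f y ∂μ| ≤ s := by rw [abs_sub_comm]; exact hcmp.trans hnear
      _ ≤ (1 + 2 * C * K) * s := le_mul_of_one_le_left hs.le (by nlinarith [C.coe_nonneg])
  | succ n ih =>
    intro s hs hsε
    have hs2 : 0 < s / 2 := half_pos hs
    have hhalf := ih (s / 2) hs2 (by rw [pow_succ] at hsε; linarith)
    have hcmp := abs_setAverage_sub_le_s16 (ball_subset_ball (half_le_self hs.le))
      (hμ z (s / 2) hs2).1.ne' (hμ z s hs).2.ne (hint z s hs) (⨍ y in ball z s, f y ∂μ)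
    have hratio : μ.real (ball z s) / μ.real (ball z (s / 2)) ≤ C := by
      rw [div_le_iff₀ (hpos _ hs2)]
      simpa [mul_div_cancel₀] using hD.measureReal_ball_two_mul_le z hs2 (hμ z _ hs2).2.ne
    calc |f z - ⨍ y in ball z s, f y ∂μ|
        ≤ |f z - ⨍ y in ball z (s / 2), f y ∂μ|
          + |(⨍ y in ball z (s / 2), f y ∂μ) - ⨍ y in ball z s, f y ∂μ| := abs_sub_le _ _ _
      _ ≤ (1 + 2 * C * K) * (s / 2) + C * (K * s) :=
        add_le_add hhalf (hcmp.trans (mul_le_mul hratio (hosc z s hs)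
          (setAverage_nonneg fun _ => abs_nonneg _) C.coe_nonneg))
      _ ≤ (1 + 2 * C * K) * s := by nlinarith

lemma abs_sub_le_of_shortAtScale (hD : DoublingWith μ C)
    (hμ : ∀ x r, 0 < r → 0 < μ (ball x r) ∧ μ (ball x r) < ⊤) (hε : 0 < ε)
    (hf : ShortAtScale ε f) (hint : ∀ x r, 0 < r → IntegrableOn f (ball x r) μ)
    (hosc : ∀ x r, 0 < r → ⨍ y in ball x r, |f y - ⨍ z in ball x r, f z ∂μ| ∂μ ≤ K * r)
    (x y : X) : |f x - f y| ≤ (3 + 8 * C ^ 2 * K) * dist x y := by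
  rcases eq_or_ne x y with rfl | hxy
  · simp
  set r := dist x y
  have hr : 0 < r := dist_pos.mpr hxy
  have hK : 0 ≤ K := by
    simpa using (setAverage_nonneg fun _ => abs_nonneg _).trans (hosc x 1 one_pos)
  have hC : 1 ≤ (C : ℝ) := by
    exact_mod_cast hD.one_le x hr (hμ x r hr).1.ne' (hμ x r hr).2.ne
  have hx := abs_sub_setAverage_ball_le hD hμ hε hf hint hosc x (by positivity : 0 < 2 * r)
  have hy := abs_sub_setAverage_ball_le hD hμ hε hf hint hosc y hr
  have hcmp := abs_setAverage_sub_le_s16 (s := ball y r) (t := ball x (2 * r))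
    (fun z hz => by rw [mem_ball] at hz ⊢; linarith [dist_triangle z y x, dist_comm x y])
    (hμ y r hr).1.ne' (hμ x _ (by positivity)).2.ne (hint x _ (by positivity))
    (⨍ z in ball x (2 * r), f z ∂μ)
  have hratio : μ.real (ball x (2 * r)) / μ.real (ball y r) ≤ C ^ 2 := by
    have hpos : 0 < μ.real (ball y r) := ENNReal.toReal_pos (hμ y r hr).1.ne' (hμ y r hr).2.ne
    rw [div_le_iff₀ hpos]
    simpa [measureReal_def, ENNReal.toReal_mul] using ENNReal.toReal_mono
      (ENNReal.mul_ne_top (by finiteness) (hμ y r hr).2.ne)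
      (hD.measure_ball_le_pow_mul (k := 2) (mem_ball.mpr (by linarith [dist_comm x y])) hr
        (by linarith))
  have hmid : |(⨍ z in ball y r, f z ∂μ) - ⨍ z in ball x (2 * r), f z ∂μ| ≤ C ^ 2 * (K * (2 * r)) :=
    hcmp.trans (mul_le_mul hratio (hosc x _ (by positivity))
      (setAverage_nonneg fun _ => abs_nonneg _) (by positivity))
  have htri := abs_add_three (f x - ⨍ z in ball x (2 * r), f z ∂μ)
    ((⨍ z in ball x (2 * r), f z ∂μ) - ⨍ z in ball y r, f z ∂μ) ((⨍ z in ball y r, f z ∂μ) - f y)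
  rw [sub_add_sub_cancel, sub_add_sub_cancel, abs_sub_comm (⨍ z in ball x (2 * r), f z ∂μ),
    abs_sub_comm (⨍ z in ball y r, f z ∂μ) (f y)] at htri
  nlinarith [mul_le_mul_of_nonneg_right hC (mul_nonneg hK hr.le)]

end Telescoping

section Poincare

variable {X : Type*} [MetricSpace X] [MeasurableSpace X] [OpensMeasurableSpace X]
  {μ : Measure X} {p L : ℝ}

lemma PoincareIneq.setAverage_abs_sub_le (hP : PoincareIneq μ p L) (hp : 0 ≤ p) (hL : 0 < L)
    {f : X → ℝ} (hf : IsLip f) (hlip : ∀ z, lipLow f z ∈ Icc 0 1) (x : X) {r : ℝ} (hr : 0 < r) :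
    ⨍ y in ball x r, |f y - ⨍ z in ball x r, f z ∂μ| ∂μ ≤ L * r := by
  have hpow : ∀ z, (lipLow f z) ^ p ∈ Icc 0 1 := fun z =>
    ⟨Real.rpow_nonneg (hlip z).1 p, Real.rpow_le_one (hlip z).1 (hlip z).2 hp⟩
  have havg : ⨍ z in ball x (L * r), (lipLow f z) ^ p ∂μ ∈ Icc 0 1 :=
    ⟨setAverage_nonneg fun z => (hpow z).1,
      setAverage_le_of_forall_le measurableSet_ball (hP.1 x _ (by positivity)).2.ne zero_le_one
        (fun z => (hpow z).1) fun z _ => (hpow z).2⟩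
  calc ⨍ y in ball x r, |f y - ⨍ z in ball x r, f z ∂μ| ∂μ
      ≤ L * r * (⨍ z in ball x (L * r), (lipLow f z) ^ p ∂μ) ^ (1 / p) := hP.2 f hf x r hr
    _ ≤ L * r * 1 := by
        gcongr
        exact Real.rpow_le_one havg.1 havg.2 (one_div_nonneg.mpr hp)
    _ = L * r := mul_one _

theorem PoincareIneq.exists_isEpsChain {C : ℝ≥0} (hD : DoublingWith μ C)
    (hP : PoincareIneq μ p L) (hp : 0 ≤ p) (hL : 0 < L) {x y : X} (hxy : x ≠ y) {ε : ℝ}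
    (hε : 0 < ε) :
    ∃ n c, IsEpsChain ε c n x y ∧ chainLength c n < (4 + 8 * C ^ 2 * L) * dist x y := by
  set M := (4 + 8 * C ^ 2 * L) * dist x y
  have hM : 0 < M := by have := dist_pos.mpr hxy; positivity
  set f := truncChainDist ε M x
  have hshort : ShortAtScale ε f := shortAtScale_truncChainDist x
  have hbdd : ∀ z w, |f z - f w| ≤ M := fun z w =>
    abs_sub_le_of_nonneg_of_le (truncChainDist_mem_Icc hM.le x z).1
      (truncChainDist_mem_Icc hM.le x z).2 (truncChainDist_mem_Icc hM.le x w).1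
      (truncChainDist_mem_Icc hM.le x w).2
  have hf : IsLip f := ⟨_, hshort.lipschitzWith hε hbdd⟩
  have hint : ∀ z r, 0 < r → IntegrableOn f (ball z r) μ := fun z r hr =>
    Measure.integrableOn_of_bounded (hP.1 z r hr).2.ne
      hf.choose_spec.continuous.aestronglyMeasurable (ae_of_all _ fun w => by
        rw [Real.norm_eq_abs, abs_of_nonneg (truncChainDist_mem_Icc hM.le x w).1]
        exact (truncChainDist_mem_Icc hM.le x w).2)
  have hxy' := abs_sub_le_of_shortAtScale hD hP.1 hε hshort hint
    (fun z r hr => hP.setAverage_abs_sub_le hp hL hf (hshort.lipLow_mem_Icc hε) z hr) x y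
  rw [show f x = 0 from truncChainDist_self x, zero_sub, abs_neg,
    abs_of_nonneg (truncChainDist_mem_Icc hM.le x y).1] at hxy'
  exact exists_isEpsChain_of_chainDist_lt (chainDist_lt_of_truncChainDist_lt
    (hxy'.trans_lt (by have := dist_pos.mpr hxy; nlinarith)))

end Poincare

section Proper

variable {X : Type*} [MetricSpace X] [MeasurableSpace X] [OpensMeasurableSpace X]
  {μ : Measure X} {C : ℝ≥0}

lemma DoublingWith.totallyBounded_ball (hD : DoublingWith μ C)
    (hμ : ∀ x r, 0 < r → 0 < μ (ball x r) ∧ μ (ball x r) < ⊤) (x : X) (R : ℝ) :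
    TotallyBounded (ball x R) := by
  rcases le_or_gt R 0 with hR | hR
  · simp [ball_eq_empty.mpr hR]
  refine Metric.totallyBounded_iff.mpr fun δ hδ => ?_
  by_contra! hcover
  obtain ⟨u, hu, hsep⟩ := exists_seq_of_forall_finset_exists (fun z => z ∈ ball x R)
    (fun a b => δ ≤ dist a b) fun s _ => by
      obtain ⟨z, hz, hfar⟩ := not_subset.mp (hcover s s.finite_toSet)
      exact ⟨z, hz, fun w hw => not_lt.mp fun h => hfar (mem_biUnion hw (mem_ball'.mpr h))⟩
  have hdisj : Pairwise (Function.onFun Disjoint fun n => ball (u n) (δ / 2)) := fun m n hmn =>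
    ball_disjoint_ball <| by
      rcases hmn.lt_or_gt with h | h
      · linarith [hsep m n h]
      · linarith [hsep n m h, dist_comm (u m) (u n)]
  obtain ⟨k, hk⟩ := pow_unbounded_of_one_lt (2 * R / (δ / 2)) (one_lt_two (α := ℝ))
  have hk' : 2 * R ≤ 2 ^ k * (δ / 2) := ((div_le_iff₀ (half_pos hδ)).mp hk.le)
  have hlow : ∀ n, μ (ball x R) / (C : ℝ≥0∞) ^ k ≤ μ (ball (u n) (δ / 2)) := fun n =>
    ENNReal.div_le_of_le_mul' (hD.measure_ball_le_pow_mul (hu n) (half_pos hδ) hk')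
  have hunion : (⋃ n, ball (u n) (δ / 2)) ⊆ ball x (R + δ) :=
    iUnion_subset fun n w hw => by
      have := mem_ball.mp (hu n)
      rw [mem_ball] at hw ⊢; linarith [dist_triangle w (u n) x]
  have htop : μ (ball x (R + δ)) = ⊤ := by
    refine top_unique ?_
    calc (⊤ : ℝ≥0∞) = ∑' _ : ℕ, μ (ball x R) / (C : ℝ≥0∞) ^ k :=
          (ENNReal.tsum_const_eq_top_of_ne_zero (by simp [(hμ x R hR).1.ne'])).symm
      _ ≤ ∑' n, μ (ball (u n) (δ / 2)) := ENNReal.tsum_le_tsum hlow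
      _ = μ (⋃ n, ball (u n) (δ / 2)) := (measure_iUnion hdisj fun _ => measurableSet_ball).symm
      _ ≤ μ (ball x (R + δ)) := measure_mono hunion
  exact (hμ x (R + δ) (by linarith)).2.ne htop

lemma DoublingWith.properSpace [CompleteSpace X] (hD : DoublingWith μ C)
    (hμ : ∀ x r, 0 < r → 0 < μ (ball x r) ∧ μ (ball x r) < ⊤) : ProperSpace X :=
  ⟨fun x R => ((hD.totallyBounded_ball hμ x (R + 1)).subset
    (closedBall_subset_ball (by linarith))).isCompact_of_isClosed isClosed_closedBall⟩

end Proper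

section Curves

lemma IsEpsChain.exists_approx_curve {X : Type*} [MetricSpace X] {δ : ℝ} {c : ℕ → X}
    {n : ℕ} {x y : X} (hc : IsEpsChain δ c n x y) (hδ : 0 ≤ δ) :
    ∃ g : ℝ → X, g 0 = x ∧ g 1 = y ∧ (∀ t, dist x (g t) ≤ chainLength c n) ∧
      ∀ s ∈ Ici (0 : ℝ), ∀ t ∈ Ici (0 : ℝ), dist (g s) (g t) ≤ chainLength c n * dist s t + δ := by
  classical
  obtain ⟨h0, hn, hstep⟩ := hc
  set B := chainLength c n
  have hB : 0 ≤ B := chainLength_nonneg c n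
  -- `idx t` is the last vertex reached within arclength `t * B`.
  set idx : ℝ → ℕ := fun t => Nat.findGreatest (fun j => chainLength c j ≤ t * B) n
  have hidx_le : ∀ t, idx t ≤ n := fun t => Nat.findGreatest_le n
  have hidx_spec : ∀ t, 0 ≤ t → chainLength c (idx t) ≤ t * B := fun t ht =>
    Nat.findGreatest_spec (P := fun j => chainLength c j ≤ t * B) (Nat.zero_le n)
      (by simp only [chainLength, Finset.range_zero, Finset.sum_empty]; positivity)
  have hdist0 : ∀ t, dist x (c (idx t)) ≤ chainLength c (idx t) := fun t => by
    simpa [← h0, chainLength] using dist_le_chainLength_sub c (Nat.zero_le (idx t))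
  refine ⟨fun t => c (idx t), ?_, ?_, fun t => (hdist0 t).trans (chainLength_mono c (hidx_le t)),
    fun s hs t ht => ?_⟩
  · exact dist_le_zero.mp ((hdist0 0).trans (by simpa using hidx_spec 0 le_rfl)) |>.symm
  · simp only [idx, one_mul, Nat.findGreatest_eq (P := fun j => chainLength c j ≤ B) le_rfl, hn]
  · wlog hst : s ≤ t generalizing s t
    · rw [dist_comm, dist_comm s]; exact this t ht s hs (le_of_not_ge hst)
    rw [Real.dist_eq, abs_of_nonpos (by linarith), neg_sub]
    have hmono : idx s ≤ idx t := Nat.le_findGreatest (hidx_le s)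
      ((hidx_spec s hs).trans (mul_le_mul_of_nonneg_right hst hB))
    rcases hmono.eq_or_lt with heq | hlt
    · simp only [heq, dist_self]; nlinarith
    · have hnext : ¬ chainLength c (idx s + 1) ≤ s * B :=
        Nat.findGreatest_is_greatest (Nat.lt_succ_self _) (hlt.trans_le (hidx_le t))
      have hjump := hstep (idx s) (hlt.trans_le (hidx_le t))
      rw [chainLength_succ] at hnext
      have hgap := dist_le_chainLength_sub c hmono
      have hreach := hidx_spec t ht
      nlinarith

lemma exists_lipschitzOnWith_of_approx {α X : Type*} [PseudoMetricSpace α] [MetricSpace X]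
    {g : ℕ → α → X} {K : Set X} (hK : IsCompact K) (hgK : ∀ n t, g n t ∈ K) {I : Set α}
    {B : ℝ} {δ : ℕ → ℝ} (hδ : Tendsto δ atTop (𝓝 0))
    (hg : ∀ n, ∀ s ∈ I, ∀ t ∈ I, dist (g n s) (g n t) ≤ B * dist s t + δ n) :
    ∃ γ : α → X, LipschitzOnWith B.toNNReal γ I ∧ ∀ t, MapClusterPt (γ t) atTop (g · t) := by
  obtain ⟨𝒰, h𝒰⟩ := Ultrafilter.exists_le (atTop : Filter ℕ)
  have hlim : ∀ t, ∃ a, Tendsto (g · t) 𝒰 (𝓝 a) := fun t => by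
    obtain ⟨a, -, ha⟩ := hK.ultrafilter_le_nhds' (𝒰.map (g · t))
      (Ultrafilter.mem_map.mpr (univ_mem' fun n => hgK n t))
    exact ⟨a, ha⟩
  choose γ hγ using hlim
  refine ⟨γ, LipschitzOnWith.of_dist_le_mul fun s hs t ht => ?_,
    fun t => ((hγ t).mapClusterPt).mono h𝒰⟩
  have hbound : Tendsto (fun n => B * dist s t + δ n) 𝒰 (𝓝 (B * dist s t)) := by
    simpa using (tendsto_const_nhds.add hδ).mono_left h𝒰
  exact (le_of_tendsto_of_tendsto' ((hγ s).dist (hγ t)) hbound fun n => hg n s hs t ht).trans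
    (mul_le_mul_of_nonneg_right (Real.le_coe_toNNReal B) dist_nonneg)

lemma LipschitzOnWith.eVariationOn_Icc_le {X : Type*} [PseudoEMetricSpace X] {f : ℝ → X}
    {K : ℝ≥0} {a b : ℝ} (hf : LipschitzOnWith K f (Icc a b)) :
    eVariationOn f (Icc a b) ≤ K * ENNReal.ofReal (b - a) := by
  simpa using hf.comp_eVariationOn_le (g := id) (mapsTo_id _)

end Curves

theorem PoincareIneq.exists_lipschitzOnWith_curve {X : Type*} [MetricSpace X] [CompleteSpace X]
    [MeasurableSpace X] [OpensMeasurableSpace X] {μ : Measure X} {C : ℝ≥0} {p L : ℝ}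
    (hD : DoublingWith μ C) (hP : PoincareIneq μ p L) (hp : 0 ≤ p) (hL : 0 < L) {x y : X}
    (hxy : x ≠ y) :
    ∃ γ : ℝ → X, γ 0 = x ∧ γ 1 = y ∧
      LipschitzOnWith ((4 + 8 * C ^ 2 * L) * dist x y).toNNReal γ (Icc 0 1) := by
  have := hD.properSpace hP.1
  set B := (4 + 8 * C ^ 2 * L) * dist x y
  have happrox : ∀ n : ℕ, ∃ g : ℝ → X, g 0 = x ∧ g 1 = y ∧ (∀ t, g t ∈ closedBall x B) ∧
      ∀ s ∈ Icc (0 : ℝ) 1, ∀ t ∈ Icc (0 : ℝ) 1, dist (g s) (g t) ≤ B * dist s t + 1 / (n + 1) := by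
    intro n
    obtain ⟨m, c, hc, hlen⟩ := hP.exists_isEpsChain hD hp hL hxy Nat.one_div_pos_of_nat
    obtain ⟨g, hg0, hg1, hgx, hg⟩ := hc.exists_approx_curve (by positivity)
    refine ⟨g, hg0, hg1, fun t => mem_closedBall'.mpr ((hgx t).trans hlen.le),
      fun s hs t ht => (hg s hs.1 t ht.1).trans ?_⟩
    gcongr
  choose g hg0 hg1 hgB hg using happrox
  obtain ⟨γ, hγ, hlim⟩ := exists_lipschitzOnWith_of_approx (isCompact_closedBall x B) hgB
    tendsto_one_div_add_atTop_nhds_zero_nat hg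
  exact ⟨γ, isClosed_singleton.mem_of_mapClusterPt (hlim 0) (.of_forall hg0),
    isClosed_singleton.mem_of_mapClusterPt (hlim 1) (.of_forall hg1), hγ⟩

/-- Lemma A.2: in a complete doubling `p`-Poincaré space there is a curve
of controlled length joining the ball `B(p₀, r/4)` to the ball `B(q₀, r/4)`, where
`r = d(p₀,q₀)`. -/
theorem exists_curve_joining_quarter_balls
    (Cμ : ℝ≥0) (L p : ℝ) (hL : 1 ≤ L) (hp : 1 ≤ p) :
    ∃ C : ℝ, 0 < C ∧
      ∀ (X : Type) [MetricSpace X] [CompleteSpace X] [MeasurableSpace X] [BorelSpace X]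
        (μ : Measure X),
        DoublingWith μ Cμ → PoincareIneq μ p L →
        ∀ p₀ q₀ : X, 0 < dist p₀ q₀ →
          ∃ γ : ℝ → X,
            ContinuousOn γ (Set.Icc 0 1) ∧
            γ 0 ∈ Metric.ball p₀ (dist p₀ q₀ / 4) ∧
            γ 1 ∈ Metric.ball q₀ (dist p₀ q₀ / 4) ∧
            eVariationOn γ (Set.Icc 0 1) ≤ ENNReal.ofReal (C * dist p₀ q₀) := by
  refine ⟨4 + 8 * max (Cμ : ℝ) 1 ^ 2 * L, by positivity, ?_⟩
  intro X _ _ _ _ μ hD hP p₀ q₀ hpq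
  obtain ⟨γ, hγ0, hγ1, hγ⟩ := hP.exists_lipschitzOnWith_curve (hD.mono (le_max_left Cμ 1))
    (by linarith) (by linarith) (dist_pos.mp hpq)
  refine ⟨γ, hγ.continuousOn, by rw [hγ0]; exact mem_ball_self (by linarith),
    by rw [hγ1]; exact mem_ball_self (by linarith), ?_⟩
  simpa [ENNReal.ofReal] using hγ.eVariationOn_Icc_le
end
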